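/- Preconditioner lower bound step: let Σ̂ ⪰ (1−ψ)·I be a symmetric PSD matrix, Z = Σ̂ + N with ‖N‖₂ ≤ κφ, V the span of eigenvectors of Z with eigenvalue ≥ κ/2, and A = (1/√K)·Π_V + Π_{V^⊥}. Let Γ = max{ 2K/((1/2 − φ)κ), 16Kφ²/(1/2 − φ)² } and assume φ < 1/2. Then A Σ̂ A ⪰ (1−ψ)(1−Γ)·I. -/

import Mathlib

/-!
Write `x = v + w` with `v ∈ V`, `w ∈ Vᗮ`, so that `A x = K^{-1/2} v + w`. Since `V` is invariant
under `Z = Σ̂ + N` and `‖N‖ ≤ κφ`, the form of `Σ̂` is at least `(1/2 - φ)κ‖v‖²` on `v` and the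
cross term `⟪Σ̂ v, w⟫ = -⟪N v, w⟫` is at most `κφ‖v‖‖w‖`. If `‖v‖² < Γ‖w‖²`, then `Σ̂ ⪰ (1 - ψ)I`
applied to `A x` already gives `(1 - ψ)‖w‖² ≥ (1 - ψ)(1 - Γ)‖x‖²`. Otherwise the second term of `Γ`
makes the cross term at most half of the `v`-contribution, and the first term of `Γ` makes that
half at least `‖v‖²/Γ ≥ (1 - ψ)(1 - Γ)‖v‖²`, because `Γ(1 - Γ) ≤ 1/4`.
-/

open scoped InnerProductSpace RealInnerProductSpace

noncomputable section

/-- The span of the eigenvectors of the symmetric operator `Z` on `ℝ^d` with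
eigenvalue at least `κ/2`. -/
def bigEigSpace {d : ℕ} (Z : EuclideanSpace ℝ (Fin d) →L[ℝ] EuclideanSpace ℝ (Fin d))
    (κ : ℝ) : Submodule ℝ (EuclideanSpace ℝ (Fin d)) :=
  ⨆ (μ : ℝ) (_ : κ / 2 ≤ μ), Module.End.eigenspace (Z : EuclideanSpace ℝ (Fin d) →ₗ[ℝ] EuclideanSpace ℝ (Fin d)) μ

/-- The orthogonal projection onto a subspace, as an operator on the ambient space. -/
def projCLM {d : ℕ} (V : Submodule ℝ (EuclideanSpace ℝ (Fin d))) :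
    EuclideanSpace ℝ (Fin d) →L[ℝ] EuclideanSpace ℝ (Fin d) :=
  V.subtypeL.comp (V.orthogonalProjectionOnto)

open Module End

theorem mul_one_sub_mul_sq_add_sq_le {s Γ D K t m α β Q : ℝ} (hs0 : 0 ≤ s) (hs1 : s ≤ 1)
    (hD : 0 ≤ D) (ht : 0 ≤ t) (htK : t ^ 2 * K = 1) (hm : 0 ≤ m) (hα : 0 ≤ α) (hβ : 0 ≤ β)
    (hΓD : 2 * K ≤ Γ * D) (hΓm : 16 * K * m ^ 2 ≤ Γ * D ^ 2)
    (hQ : s * β ^ 2 ≤ Q) (hQ' : D * t ^ 2 * α ^ 2 - 2 * t * m * α * β + s * β ^ 2 ≤ Q) :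
    s * (1 - Γ) * (α ^ 2 + β ^ 2) ≤ Q := by
  replace hΓD : 2 ≤ Γ * D * t ^ 2 := by nlinarith [mul_le_mul_of_nonneg_right hΓD (sq_nonneg t)]
  replace hΓm : 16 * m ^ 2 ≤ Γ * D ^ 2 * t ^ 2 := by
    nlinarith [mul_le_mul_of_nonneg_right hΓm (sq_nonneg t)]
  have hΓ : 0 < Γ := by
    by_contra! h
    nlinarith [mul_nonneg hD (sq_nonneg t)]
  rcases lt_or_ge (α ^ 2) (Γ * β ^ 2) with hsmall | hlarge
  · nlinarith [mul_nonneg hs0 (mul_nonneg hΓ.le (sq_nonneg α))]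
  have hcross : 4 * m * β ≤ D * t * α := by
    refine (pow_le_pow_iff_left₀ (by positivity) (by positivity) two_ne_zero).mp ?_
    calc (4 * m * β) ^ 2 = 16 * m ^ 2 * β ^ 2 := by ring
      _ ≤ Γ * D ^ 2 * t ^ 2 * β ^ 2 := by gcongr
      _ = (D * t) ^ 2 * (Γ * β ^ 2) := by ring
      _ ≤ (D * t) ^ 2 * α ^ 2 := by gcongr
      _ = (D * t * α) ^ 2 := by ring
  have hQ_half : D * t ^ 2 * α ^ 2 / 2 + s * β ^ 2 ≤ Q := by
    nlinarith [mul_le_mul_of_nonneg_left hcross (mul_nonneg ht hα)]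
  have hα_half : s * (1 - Γ) * α ^ 2 ≤ D * t ^ 2 * α ^ 2 / 2 := by
    have hΓs : Γ * (s * (1 - Γ)) ≤ 1 := by nlinarith [sq_nonneg (Γ - 1 / 2)]
    refine le_of_mul_le_mul_left ?_ hΓ
    nlinarith [sq_nonneg α]
  nlinarith [mul_nonneg hs0 (mul_nonneg hΓ.le (sq_nonneg β))]

theorem Module.End.mapsTo_biSup_eigenspace {R M : Type*} [CommRing R] [AddCommGroup M]
    [Module R M] (T : End R M) (p : R → Prop) :
    Set.MapsTo T (⨆ (μ : R) (_ : p μ), T.eigenspace μ : Submodule R M)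
      (⨆ (μ : R) (_ : p μ), T.eigenspace μ : Submodule R M) := by
  have hle : (⨆ (μ : R) (_ : p μ), T.eigenspace μ) ≤ (⨆ (μ : R) (_ : p μ), T.eigenspace μ).comap T :=
    iSup₂_le fun μ hμ _ hx =>
      le_iSup₂ (f := fun μ (_ : p μ) => T.eigenspace μ) μ hμ
        (mapsTo_genEigenspace_of_comm (Commute.refl T) μ 1 hx)
  exact fun _ hu => hle hu

section InnerProductSpace

variable {E : Type*} [NormedAddCommGroup E] [InnerProductSpace ℝ E]

theorem LinearMap.IsSymmetric.mul_norm_sq_le_inner_of_mem_iSup_eigenspace {T : E →ₗ[ℝ] E}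
    (hT : T.IsSymmetric) {c : ℝ} {u : E} (hu : u ∈ ⨆ (μ : ℝ) (_ : c ≤ μ), eigenspace T μ) :
    c * ‖u‖ ^ 2 ≤ ⟪T u, u⟫ := by
  rw [iSup_subtype', Submodule.mem_iSup_iff_exists_finset] at hu
  obtain ⟨s, hs⟩ := hu
  obtain ⟨l, rfl⟩ := (Submodule.mem_iSup_finset_iff_exists_sum _ _).mp hs
  have horth : OrthogonalFamily ℝ (fun μ : {μ : ℝ // c ≤ μ} => eigenspace T μ)
      (fun μ => (eigenspace T μ).subtypeₗᵢ) :=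
    hT.orthogonalFamily_eigenspaces.comp Subtype.val_injective
  have hTl : ∀ μ : {μ : ℝ // c ≤ μ}, T (l μ) = (μ : ℝ) • (l μ : E) := fun μ =>
    mem_eigenspace_iff.mp (l μ).2
  have hnorm := horth.norm_sum l s
  have hinner := horth.inner_sum (fun μ => (μ : ℝ) • l μ) l s
  simp only [Submodule.coe_subtypeₗᵢ, Submodule.subtype_apply, Submodule.coe_smul] at hnorm hinner
  rw [map_sum, Finset.sum_congr rfl fun μ _ => hTl μ, hnorm, hinner, Finset.mul_sum]
  refine Finset.sum_le_sum fun μ _ => ?_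
  rw [inner_smul_left, real_inner_self_eq_norm_sq]
  exact mul_le_mul_of_nonneg_right μ.2 (sq_nonneg _)

theorem sub_opNorm_mul_norm_sq_le_inner {S N : E →L[ℝ] E} {c : ℝ} {v : E}
    (hv : c * ‖v‖ ^ 2 ≤ ⟪(S + N) v, v⟫) : (c - ‖N‖) * ‖v‖ ^ 2 ≤ ⟪S v, v⟫ := by
  have hN : ⟪N v, v⟫ ≤ ‖N‖ * ‖v‖ ^ 2 :=
    calc ⟪N v, v⟫ ≤ ‖N v‖ * ‖v‖ := real_inner_le_norm _ _
      _ ≤ ‖N‖ * ‖v‖ * ‖v‖ := by gcongr; exact N.le_opNorm v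
      _ = ‖N‖ * ‖v‖ ^ 2 := by ring
  rw [add_apply, inner_add_left] at hv
  linarith

theorem abs_inner_le_opNorm_of_mapsTo_add {S N : E →L[ℝ] E} {V : Submodule ℝ E}
    (hV : Set.MapsTo (S + N) V V) {v w : E} (hv : v ∈ V) (hw : w ∈ Vᗮ) :
    |⟪S v, w⟫| ≤ ‖N‖ * ‖v‖ * ‖w‖ := by
  have hSN : ⟪S v, w⟫ = -⟪N v, w⟫ := by
    have h := Submodule.inner_right_of_mem_orthogonal (hV hv) hw
    rw [add_apply, inner_add_left] at h
    linarith
  calc |⟪S v, w⟫| = |⟪N v, w⟫| := by rw [hSN, abs_neg]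
    _ ≤ ‖N v‖ * ‖w‖ := abs_real_inner_le_norm _ _
    _ ≤ ‖N‖ * ‖v‖ * ‖w‖ := by gcongr; exact N.le_opNorm v

theorem mul_one_sub_mul_norm_sq_le_inner_smul_add {S : E →ₗ[ℝ] E} (hS : S.IsSymmetric)
    {s Γ D K t m : ℝ} (hs0 : 0 ≤ s) (hs1 : s ≤ 1) (hD : 0 ≤ D) (ht : 0 ≤ t)
    (htK : t ^ 2 * K = 1) (hm : 0 ≤ m) (hΓD : 2 * K ≤ Γ * D) (hΓm : 16 * K * m ^ 2 ≤ Γ * D ^ 2)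
    (hlow : ∀ y, s * ‖y‖ ^ 2 ≤ ⟪S y, y⟫) {v w : E} (hvw : ⟪v, w⟫ = 0)
    (hv : D * ‖v‖ ^ 2 ≤ ⟪S v, v⟫) (hcross : |⟪S v, w⟫| ≤ m * ‖v‖ * ‖w‖) :
    s * (1 - Γ) * (‖v‖ ^ 2 + ‖w‖ ^ 2) ≤ ⟪S (t • v + w), t • v + w⟫ := by
  have hexpand : ⟪S (t • v + w), t • v + w⟫ =
      t ^ 2 * ⟪S v, v⟫ + 2 * t * ⟪S v, w⟫ + ⟪S w, w⟫ := by
    simp only [map_add, map_smul, inner_add_left, inner_add_right, real_inner_smul_left,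
      real_inner_smul_right, hS w v]
    rw [real_inner_comm (S v) w]
    ring
  have hnorm : ‖t • v + w‖ ^ 2 = t ^ 2 * ‖v‖ ^ 2 + ‖w‖ ^ 2 := by
    rw [norm_add_sq_real, real_inner_smul_left, hvw, norm_smul, Real.norm_of_nonneg ht]
    ring
  have hQ : s * ‖w‖ ^ 2 ≤ ⟪S (t • v + w), t • v + w⟫ := by
    have h := hlow (t • v + w)
    rw [hnorm] at h
    nlinarith [mul_nonneg hs0 (mul_nonneg (sq_nonneg t) (sq_nonneg ‖v‖))]
  refine mul_one_sub_mul_sq_add_sq_le hs0 hs1 hD ht htK hm (norm_nonneg v)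
    (norm_nonneg w) hΓD hΓm hQ ?_
  rw [hexpand]
  nlinarith [(abs_le.mp hcross).1, hlow w, sq_nonneg t]

end InnerProductSpace

/-- Preconditioner lower bound step: let `Σ̂ ⪰ (1−ψ)·I` be symmetric PSD,
`Z = Σ̂ + N` with `‖N‖₂ ≤ κ·φ`, `V` the span of eigenvectors of `Z` with eigenvalue
`≥ κ/2`, and `A = (1/√K)·Π_V + Π_{V^⊥}`. With
`Γ = max( 2K/((1/2 − φ)κ), 16Kφ²/(1/2 − φ)² )` and `φ < 1/2`,
we have `A Σ̂ A ⪰ (1−ψ)(1−Γ)·I`. -/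
theorem stmt_16 {d : ℕ}
    (Sig N : EuclideanSpace ℝ (Fin d) →L[ℝ] EuclideanSpace ℝ (Fin d))
    (hSigSym : (Sig : EuclideanSpace ℝ (Fin d) →ₗ[ℝ] EuclideanSpace ℝ (Fin d)).IsSymmetric)
    (hNSym : (N : EuclideanSpace ℝ (Fin d) →ₗ[ℝ] EuclideanSpace ℝ (Fin d)).IsSymmetric)
    (ψ φ κ K Γ : ℝ) (hψ0 : 0 ≤ ψ) (hψ1 : ψ ≤ 1) (hφ0 : 0 ≤ φ) (hφ : φ < 1 / 2)
    (hκ : 0 < κ) (hK : 0 < K)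
    (hSiglow : ∀ x, (1 - ψ) * ‖x‖^2 ≤ ⟪Sig x, x⟫_ℝ)
    (hN : ‖N‖ ≤ κ * φ)
    (hΓ : Γ = max (2 * K / ((1 / 2 - φ) * κ)) (16 * K * φ^2 / (1 / 2 - φ)^2))
    (A : EuclideanSpace ℝ (Fin d) →L[ℝ] EuclideanSpace ℝ (Fin d))
    (hA : A = (Real.sqrt K)⁻¹ • projCLM (bigEigSpace (Sig + N) κ) +
        projCLM (bigEigSpace (Sig + N) κ)ᗮ) :
    ∀ x, (1 - ψ) * (1 - Γ) * ‖x‖^2 ≤ ⟪(A.comp (Sig.comp A)) x, x⟫_ℝ := by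
  intro x
  set V := bigEigSpace (Sig + N) κ
  set t := (Real.sqrt K)⁻¹
  set v := V.starProjection x
  set w := Vᗮ.starProjection x
  have hD : 0 < (1 / 2 - φ) * κ := mul_pos (by linarith) hκ
  have htK : t ^ 2 * K = 1 := by rw [inv_pow, Real.sq_sqrt hK.le, inv_mul_cancel₀ hK.ne']
  have hAx : A x = t • v + w := by rw [hA]; rfl
  have hAsymm : ⟪A (Sig (A x)), x⟫ = ⟪Sig (A x), A x⟫ := by
    rw [hA]
    exact ((V.starProjection_isSymmetric.smul (conj_trivial t)).add
      Vᗮ.starProjection_isSymmetric) _ _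
  have hZ : ((Sig + N : _ →L[ℝ] _) : EuclideanSpace ℝ (Fin d) →ₗ[ℝ] _).IsSymmetric :=
    hSigSym.add hNSym
  have hvV : v ∈ V := V.starProjection_apply_mem x
  have hv : (1 / 2 - φ) * κ * ‖v‖ ^ 2 ≤ ⟪Sig v, v⟫ := by
    refine le_trans ?_ (sub_opNorm_mul_norm_sq_le_inner
      (hZ.mul_norm_sq_le_inner_of_mem_iSup_eigenspace hvV))
    gcongr
    linarith
  have hwV : w ∈ Vᗮ := Vᗮ.starProjection_apply_mem x
  have hcross : |⟪Sig v, w⟫| ≤ κ * φ * ‖v‖ * ‖w‖ :=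
    (abs_inner_le_opNorm_of_mapsTo_add (mapsTo_biSup_eigenspace _ _) hvV hwV).trans (by gcongr)
  have hΓD : 2 * K ≤ Γ * ((1 / 2 - φ) * κ) := (div_le_iff₀ hD).mp (hΓ ▸ le_max_left _ _)
  have hΓm : 16 * K * (κ * φ) ^ 2 ≤ Γ * ((1 / 2 - φ) * κ) ^ 2 := by
    have h : 16 * K * φ ^ 2 ≤ Γ * (1 / 2 - φ) ^ 2 :=
      (div_le_iff₀ (by positivity)).mp (hΓ ▸ le_max_right _ _)
    nlinarith [mul_le_mul_of_nonneg_right h (sq_nonneg κ)]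
  calc (1 - ψ) * (1 - Γ) * ‖x‖ ^ 2 = (1 - ψ) * (1 - Γ) * (‖v‖ ^ 2 + ‖w‖ ^ 2) := by
        rw [V.norm_sq_eq_add_norm_sq_starProjection x]
    _ ≤ ⟪Sig (t • v + w), t • v + w⟫ :=
      mul_one_sub_mul_norm_sq_le_inner_smul_add hSigSym (by linarith) (by linarith) hD.le
        (by positivity) htK (by positivity) hΓD hΓm hSiglow
        (Submodule.inner_right_of_mem_orthogonal hvV hwV) hv hcross
    _ = ⟪(A.comp (Sig.comp A)) x, x⟫ := by rw [← hAx, ← hAsymm]; rfl
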